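/- Let r > 0, let a : [0,∞) → ℝ^n be measurable with ∫₀^∞ e^{−rt}|a_t|² dt < ∞, and define x_t = ∫₀ᵗ a_s ds. Then ∫₀^∞ e^{−rt}|x_t|² dt ≤ (4/r²)·∫₀^∞ e^{−rt}|a_t|² dt. -/

import Mathlib

open MeasureTheory intervalIntegral

open Set Real
open scoped ENNReal

/-!
By Cauchy–Schwarz with the weight `e^{rs/2}`,
`|x_t|² ≤ (∫₀ᵗ e^{rs/2} ds) (∫₀ᵗ e^{-rs/2} |a_s|² ds) ≤ (2/r) e^{rt/2} ∫₀ᵗ e^{-rs/2} |a_s|² ds`.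
Multiplying by `e^{-rt}`, integrating over `t > 0` and exchanging the order of integration,
the inner integral `∫ₛ^∞ e^{-rt/2} dt = (2/r) e^{-rs/2}` supplies the second factor `2/r`.
The argument is carried out with lower Lebesgue integrals, so that nothing needs to be known
about the measurability or integrability of `x`.
-/

lemma sq_lintegral_mul_le {α : Type*} [MeasurableSpace α] (μ : Measure α) {f g : α → ℝ≥0∞}
    (hf : AEMeasurable f μ) (hg : AEMeasurable g μ) :
    (∫⁻ a, f a * g a ∂μ) ^ 2 ≤ (∫⁻ a, f a ^ 2 ∂μ) * ∫⁻ a, g a ^ 2 ∂μ := by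
  have h := ENNReal.lintegral_mul_le_Lp_mul_Lq μ Real.HolderConjugate.two_two hf hg
  calc (∫⁻ a, f a * g a ∂μ) ^ 2
      ≤ ((∫⁻ a, f a ^ (2 : ℝ) ∂μ) ^ (1 / 2 : ℝ) * (∫⁻ a, g a ^ (2 : ℝ) ∂μ) ^ (1 / 2 : ℝ)) ^ 2 :=
        pow_le_pow_left' h 2
    _ = (∫⁻ a, f a ^ 2 ∂μ) * ∫⁻ a, g a ^ 2 ∂μ := by
        simp only [ENNReal.rpow_two, mul_pow, ← ENNReal.rpow_natCast, ← ENNReal.rpow_mul]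
        norm_num

lemma lintegral_Iic_ofReal_exp_mul {c : ℝ} (hc : 0 < c) (t : ℝ) :
    ∫⁻ s in Iic t, ENNReal.ofReal (exp (c * s)) = ENNReal.ofReal (exp (c * t) / c) := by
  rw [← integral_exp_mul_Iic hc, ofReal_integral_eq_lintegral_ofReal
    (integrableOn_exp_mul_Iic hc t) (ae_of_all _ fun s => (exp_pos _).le)]

lemma lintegral_Ici_ofReal_exp_mul {c : ℝ} (hc : c < 0) (t : ℝ) :
    ∫⁻ s in Ici t, ENNReal.ofReal (exp (c * s)) = ENNReal.ofReal (-exp (c * t) / c) := by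
  rw [← Measure.restrict_congr_set Ioi_ae_eq_Ici, ← integral_exp_mul_Ioi hc,
    ofReal_integral_eq_lintegral_ofReal (integrableOn_exp_mul_Ioi hc t)
      (ae_of_all _ fun s => (exp_pos _).le)]

lemma ofReal_exp_add (u v : ℝ) :
    ENNReal.ofReal (exp (u + v)) = ENNReal.ofReal (exp u) * ENNReal.ofReal (exp v) := by
  rw [exp_add, ENNReal.ofReal_mul (exp_pos _).le]

lemma ofReal_exp_mul_sq_norm {E : Type*} [SeminormedAddCommGroup E] (u : ℝ) (v : E) :
    ENNReal.ofReal (exp u * ‖v‖ ^ 2) = ENNReal.ofReal (exp u) * ‖v‖ₑ ^ 2 := by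
  rw [ENNReal.ofReal_mul (exp_pos _).le, ENNReal.ofReal_pow (norm_nonneg _), ofReal_norm]

section Primitive

variable {E : Type*} [NormedAddCommGroup E] [NormedSpace ℝ E] {a : ℝ → E} {t₀ t : ℝ}

lemma sq_enorm_intervalIntegral_le (ha : AEStronglyMeasurable a) (ht : t₀ ≤ t) {c : ℝ}
    (hc : 0 < c) :
    ‖∫ s in t₀..t, a s‖ₑ ^ 2 ≤ ENNReal.ofReal (exp (c * t) / c) *
      ∫⁻ s in Ioc t₀ t, ENNReal.ofReal (exp (-c * s)) * ‖a s‖ₑ ^ 2 := by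
  have hsplit : ∀ s, ‖a s‖ₑ =
      ENNReal.ofReal (exp (c / 2 * s)) * (ENNReal.ofReal (exp (-c / 2 * s)) * ‖a s‖ₑ) := by
    intro s
    rw [← mul_assoc, ← ofReal_exp_add, show c / 2 * s + -c / 2 * s = 0 by ring, exp_zero,
      ENNReal.ofReal_one, one_mul]
  have hsq : ∀ u s : ℝ, ENNReal.ofReal (exp (u / 2 * s)) ^ 2 = ENNReal.ofReal (exp (u * s)) := by
    intro u s
    rw [sq, ← ofReal_exp_add]
    ring_nf
  calc ‖∫ s in t₀..t, a s‖ₑ ^ 2 ≤ (∫⁻ s in Ioc t₀ t, ‖a s‖ₑ) ^ 2 := by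
        rw [integral_of_le ht]
        gcongr
        exact enorm_integral_le_lintegral_enorm _
    _ ≤ (∫⁻ s in Ioc t₀ t, ENNReal.ofReal (exp (c / 2 * s)) ^ 2) *
          ∫⁻ s in Ioc t₀ t, (ENNReal.ofReal (exp (-c / 2 * s)) * ‖a s‖ₑ) ^ 2 := by
        rw [show (fun s => ‖a s‖ₑ) = _ from funext hsplit]
        exact sq_lintegral_mul_le _ (by fun_prop) (by fun_prop)
    _ = (∫⁻ s in Ioc t₀ t, ENNReal.ofReal (exp (c * s))) *
          ∫⁻ s in Ioc t₀ t, ENNReal.ofReal (exp (-c * s)) * ‖a s‖ₑ ^ 2 := by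
        simp_rw [mul_pow, hsq]
    _ ≤ ENNReal.ofReal (exp (c * t) / c) *
          ∫⁻ s in Ioc t₀ t, ENNReal.ofReal (exp (-c * s)) * ‖a s‖ₑ ^ 2 := by
        gcongr
        rw [← lintegral_Iic_ofReal_exp_mul hc]
        exact lintegral_mono_set Ioc_subset_Iic_self

lemma ofReal_exp_mul_sq_enorm_intervalIntegral_le (ha : AEStronglyMeasurable a) (ht : t₀ ≤ t)
    {r : ℝ} (hr : 0 < r) :
    ENNReal.ofReal (exp (-r * t)) * ‖∫ s in t₀..t, a s‖ₑ ^ 2 ≤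
      ENNReal.ofReal (2 / r) * (ENNReal.ofReal (exp (-(r / 2) * t)) *
        ∫⁻ s in Ioc t₀ t, ENNReal.ofReal (exp (-(r / 2) * s)) * ‖a s‖ₑ ^ 2) := by
  have hexp : exp (-r * t) * (exp (r / 2 * t) / (r / 2)) = 2 / r * exp (-(r / 2) * t) := by
    field_simp
    rw [← exp_add]
    ring_nf
  rw [← mul_assoc, ← ENNReal.ofReal_mul (by positivity), ← hexp,
    ENNReal.ofReal_mul (exp_pos _).le, mul_assoc]
  gcongr
  exact sq_enorm_intervalIntegral_le ha ht (half_pos hr)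

end Primitive

lemma lintegral_mul_lintegral_Iic {μ ν : Measure ℝ} [SFinite μ] [SFinite ν] {φ ψ : ℝ → ℝ≥0∞}
    (hφ : Measurable φ) (hψ : Measurable ψ) :
    ∫⁻ t, ψ t * ∫⁻ s in Iic t, φ s ∂ν ∂μ = ∫⁻ s, φ s * ∫⁻ t in Ici s, ψ t ∂μ ∂ν := by
  have hK : Measurable (Function.uncurry fun t s : ℝ => if s ≤ t then ψ t * φ s else 0) :=
    Measurable.ite (measurableSet_le measurable_snd measurable_fst)
      ((hψ.comp measurable_fst).mul (hφ.comp measurable_snd)) measurable_const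
  calc ∫⁻ t, ψ t * ∫⁻ s in Iic t, φ s ∂ν ∂μ
      = ∫⁻ t, ∫⁻ s, (if s ≤ t then ψ t * φ s else 0) ∂ν ∂μ := by
        refine lintegral_congr fun t => ?_
        rw [← lintegral_const_mul _ hφ, ← lintegral_indicator measurableSet_Iic]
        rfl
    _ = ∫⁻ s, ∫⁻ t, (if s ≤ t then ψ t * φ s else 0) ∂μ ∂ν :=
        lintegral_lintegral_swap hK.aemeasurable
    _ = ∫⁻ s, φ s * ∫⁻ t in Ici s, ψ t ∂μ ∂ν := by
        refine lintegral_congr fun s => ?_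
        rw [mul_comm, ← lintegral_mul_const _ hψ, ← lintegral_indicator measurableSet_Ici]
        rfl

lemma lintegral_exp_mul_lintegral_Iic_le {μ : Measure ℝ} [SFinite μ] (hμ : μ ≤ volume) {r : ℝ}
    (hr : 0 < r) {f : ℝ → ℝ≥0∞} (hf : Measurable f) :
    ∫⁻ t, ENNReal.ofReal (exp (-(r / 2) * t)) *
        ∫⁻ s in Iic t, ENNReal.ofReal (exp (-(r / 2) * s)) * f s ∂μ ∂μ ≤
      ENNReal.ofReal (2 / r) * ∫⁻ s, ENNReal.ofReal (exp (-r * s)) * f s ∂μ := by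
  set ψ : ℝ → ℝ≥0∞ := fun t => ENNReal.ofReal (exp (-(r / 2) * t))
  have htail : ∀ s, ∫⁻ t in Ici s, ψ t ∂μ ≤ ENNReal.ofReal (2 / r) * ψ s := fun s => calc
    _ ≤ ∫⁻ t in Ici s, ψ t := lintegral_mono' (Measure.restrict_mono subset_rfl hμ) le_rfl
    _ = ENNReal.ofReal (2 / r) * ψ s := by
      rw [lintegral_Ici_ofReal_exp_mul (by linarith), ← ENNReal.ofReal_mul (by positivity)]
      congr 1
      field_simp
  have hψψ : ∀ s, ψ s * ψ s = ENNReal.ofReal (exp (-r * s)) := fun s => by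
    rw [show -r * s = -(r / 2) * s + -(r / 2) * s by ring, ofReal_exp_add]
  calc ∫⁻ t, ψ t * ∫⁻ s in Iic t, ψ s * f s ∂μ ∂μ
      = ∫⁻ s, ψ s * f s * ∫⁻ t in Ici s, ψ t ∂μ ∂μ :=
        lintegral_mul_lintegral_Iic (by fun_prop) (by fun_prop)
    _ ≤ ∫⁻ s, ψ s * f s * (ENNReal.ofReal (2 / r) * ψ s) ∂μ := by
        gcongr with s
        exact htail s
    _ = ENNReal.ofReal (2 / r) * ∫⁻ s, ENNReal.ofReal (exp (-r * s)) * f s ∂μ := by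
        simp_rw [← hψψ]
        rw [← lintegral_const_mul' _ _ ENNReal.ofReal_ne_top]
        congr with s
        ring

lemma integral_le_mul_integral_of_lintegral_le {α : Type*} [MeasurableSpace α] {μ : Measure α}
    {f g : α → ℝ} (hf : ∀ x, 0 ≤ f x) (hg : ∀ x, 0 ≤ g x) (hgi : Integrable g μ) {c : ℝ}
    (hc : 0 ≤ c)
    (h : ∫⁻ x, ENNReal.ofReal (f x) ∂μ ≤ ENNReal.ofReal c * ∫⁻ x, ENNReal.ofReal (g x) ∂μ) :
    ∫ x, f x ∂μ ≤ c * ∫ x, g x ∂μ := by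
  rw [← ofReal_integral_eq_lintegral_ofReal hgi (ae_of_all _ hg)] at h
  calc ∫ x, f x ∂μ ≤ (∫⁻ x, ENNReal.ofReal (f x) ∂μ).toReal := by
        simpa only [norm_of_nonneg (hf _)] using le_norm_self _ |>.trans
          (norm_integral_le_lintegral_norm f)
    _ ≤ (ENNReal.ofReal c * ENNReal.ofReal (∫ x, g x ∂μ)).toReal :=
        ENNReal.toReal_mono (by finiteness) h
    _ = c * ∫ x, g x ∂μ := by
        rw [← ENNReal.ofReal_mul hc, ENNReal.toReal_ofReal (mul_nonneg hc (integral_nonneg hg))]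

theorem stmt_6_general {n : ℕ} (r : ℝ) (hr : 0 < r) (a : ℝ → EuclideanSpace ℝ (Fin n))
    (hmeas : Measurable a)
    (ha : Integrable (fun t => Real.exp (-r * t) * ‖a t‖ ^ 2)
      (volume.restrict (Set.Ioi (0:ℝ))))
    (x : ℝ → EuclideanSpace ℝ (Fin n))
    (hx : ∀ t, x t = ∫ s in (0:ℝ)..t, a s) :
    (∫ t in Set.Ioi (0:ℝ), Real.exp (-r * t) * ‖x t‖ ^ 2) ≤
      4 / r ^ 2 * ∫ t in Set.Ioi (0:ℝ), Real.exp (-r * t) * ‖a t‖ ^ 2 := by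
  refine integral_le_mul_integral_of_lintegral_le (fun t => by positivity)
    (fun t => by positivity) ha (by positivity) ?_
  set μ := volume.restrict (Ioi (0:ℝ))
  set ψ : ℝ → ℝ≥0∞ := fun t => ENNReal.ofReal (exp (-(r / 2) * t))
  simp only [ofReal_exp_mul_sq_norm]
  have hx_le : ∀ t ∈ Ioi (0:ℝ), ENNReal.ofReal (exp (-r * t)) * ‖x t‖ₑ ^ 2 ≤
      ENNReal.ofReal (2 / r) * (ψ t * ∫⁻ s in Iic t, ψ s * ‖a s‖ₑ ^ 2 ∂μ) := by
    intro t ht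
    rw [Measure.restrict_restrict measurableSet_Iic, Iic_inter_Ioi, hx t]
    exact ofReal_exp_mul_sq_enorm_intervalIntegral_le hmeas.aestronglyMeasurable ht.le hr
  calc ∫⁻ t, ENNReal.ofReal (exp (-r * t)) * ‖x t‖ₑ ^ 2 ∂μ
      ≤ ∫⁻ t, ENNReal.ofReal (2 / r) * (ψ t * ∫⁻ s in Iic t, ψ s * ‖a s‖ₑ ^ 2 ∂μ) ∂μ :=
        lintegral_mono_ae (ae_restrict_of_forall_mem measurableSet_Ioi hx_le)
    _ ≤ ENNReal.ofReal (2 / r) *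
          (ENNReal.ofReal (2 / r) * ∫⁻ s, ENNReal.ofReal (exp (-r * s)) * ‖a s‖ₑ ^ 2 ∂μ) := by
        rw [lintegral_const_mul' _ _ ENNReal.ofReal_ne_top]
        gcongr
        exact lintegral_exp_mul_lintegral_Iic_le Measure.restrict_le_self hr (by fun_prop)
    _ = ENNReal.ofReal (4 / r ^ 2) * ∫⁻ s, ENNReal.ofReal (exp (-r * s)) * ‖a s‖ₑ ^ 2 ∂μ := by
        rw [← mul_assoc, ← ENNReal.ofReal_mul (by positivity)]
        congr 2
        ring

/-- Discounted energy estimate: for `x_t = ∫₀ᵗ a_s ds`,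
`∫₀^∞ e^{−rt}|x_t|² dt ≤ (4/r²) ∫₀^∞ e^{−rt}|a_t|² dt`. -/
theorem stmt_6 {n : ℕ} (r : ℝ) (hr : 0 < r) (a : ℝ → EuclideanSpace ℝ (Fin n))
    (hmeas : Measurable a)
    (haloc : ∀ t : ℝ, IntegrableOn a (Set.Ioc 0 t) volume)
    (ha : Integrable (fun t => Real.exp (-r * t) * ‖a t‖ ^ 2)
      (volume.restrict (Set.Ioi (0:ℝ))))
    (x : ℝ → EuclideanSpace ℝ (Fin n))
    (hx : ∀ t, x t = ∫ s in (0:ℝ)..t, a s) :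
    (∫ t in Set.Ioi (0:ℝ), Real.exp (-r * t) * ‖x t‖ ^ 2) ≤
      4 / r ^ 2 * ∫ t in Set.Ioi (0:ℝ), Real.exp (-r * t) * ‖a t‖ ^ 2 :=
  stmt_6_general r hr a hmeas ha x hx
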